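/- Let f be a univalent holomorphic function on 𝔻, Γ₁ a group of Möbius transformations preserving 𝔻, and Γ a group of Möbius transformations of the Riemann sphere such that for every γ ∈ Γ₁ there exists γ̃ ∈ Γ with f ∘ γ = γ̃ ∘ f. Then the kernel K₁(z,w) = (1/π)(1/(z−w)² − f'(z)f'(w)/(f(z)−f(w))²) satisfies K₁(γz, γw)·γ'(z)·γ'(w) = K₁(z,w) for all γ ∈ Γ₁ and z, w ∈ 𝔻 with γz ≠ γw. -/

import Mathlib

/-! The kernel `1 / (z - w) ^ 2` is a Möbius-invariant bilinear `(1,1)`-form, and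
`f' z * f' w / (f z - f w) ^ 2` is its pullback by `f`. Since `f ∘ γ = γ̃ ∘ f`, pulling
back by `γ` amounts to pulling back by `γ̃` and then by `f`, and invariance under `γ̃` shows
that the second term of `K₁` transforms exactly like the first. -/

open Filter Topology

noncomputable def mobius (a b c d z : ℂ) : ℂ := (a * z + b) / (c * z + d)

section Mobius

variable {a b c d : ℂ}

lemma mobius_sub_mobius (hdet : a * d - b * c = 1) {z w : ℂ}
    (hz : c * z + d ≠ 0) (hw : c * w + d ≠ 0) :
    mobius a b c d z - mobius a b c d w = (z - w) / ((c * z + d) * (c * w + d)) := by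
  rw [mobius, mobius, div_sub_div _ _ hz hw]
  congr 1
  linear_combination (z - w) * hdet

lemma one_div_mobius_sub_sq_mul (hdet : a * d - b * c = 1) {z w : ℂ}
    (hz : c * z + d ≠ 0) (hw : c * w + d ≠ 0) :
    1 / (mobius a b c d z - mobius a b c d w) ^ 2 * (1 / (c * z + d) ^ 2) *
        (1 / (c * w + d) ^ 2) = 1 / (z - w) ^ 2 := by
  rw [mobius_sub_mobius hdet hz hw, div_pow, one_div_div, mul_pow]
  field_simp

lemma HasDerivAt.mobius_comp (hdet : a * d - b * c = 1) {g : ℂ → ℂ} {g' z : ℂ}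
    (hg : HasDerivAt g g' z) (hz : c * g z + d ≠ 0) :
    HasDerivAt (fun x => mobius a b c d (g x)) (g' / (c * g z + d) ^ 2) z := by
  have h := ((hg.const_mul a).add_const b).div ((hg.const_mul c).add_const d) hz
  rwa [show a * g' * (c * g z + d) - (a * g z + b) * (c * g') = g' by
    linear_combination g' * hdet] at h

lemma hasDerivAt_mobius (hdet : a * d - b * c = 1) {z : ℂ} (hz : c * z + d ≠ 0) :
    HasDerivAt (mobius a b c d) (1 / (c * z + d) ^ 2) z :=
  (hasDerivAt_id z).mobius_comp hdet hz

end Mobius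

section Conjugacy

variable {f : ℂ → ℂ} {a b c d a' b' c' d' z : ℂ}

/-- Both sides are the derivative at `z` of `f ∘ γ = γ̃ ∘ f`. -/
lemma deriv_mobius_mul_of_conj (hdet : a * d - b * c = 1) (hdet' : a' * d' - b' * c' = 1)
    (hfγ : DifferentiableAt ℂ f (mobius a b c d z)) (hf : DifferentiableAt ℂ f z)
    (hz : c * z + d ≠ 0) (hfz : c' * f z + d' ≠ 0)
    (hconj : (fun x => f (mobius a b c d x)) =ᶠ[𝓝 z] fun x => mobius a' b' c' d' (f x)) :
    deriv f (mobius a b c d z) * (1 / (c * z + d) ^ 2) = deriv f z * (1 / (c' * f z + d') ^ 2) := by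
  have hleft := hfγ.hasDerivAt.comp z (hasDerivAt_mobius hdet hz)
  have hright := hf.hasDerivAt.mobius_comp hdet' hfz
  rw [mul_one_div (deriv f z)]
  exact (hleft.congr_of_eventuallyEq hconj.symm).unique hright

lemma deriv_mul_deriv_div_mobius_sub_sq_of_conj (hdet' : a' * d' - b' * c' = 1) {w : ℂ}
    (hfz : c' * f z + d' ≠ 0) (hfw : c' * f w + d' ≠ 0)
    (hconj_z : f (mobius a b c d z) = mobius a' b' c' d' (f z))
    (hconj_w : f (mobius a b c d w) = mobius a' b' c' d' (f w))
    (hderiv_z : deriv f (mobius a b c d z) * (1 / (c * z + d) ^ 2) =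
      deriv f z * (1 / (c' * f z + d') ^ 2))
    (hderiv_w : deriv f (mobius a b c d w) * (1 / (c * w + d) ^ 2) =
      deriv f w * (1 / (c' * f w + d') ^ 2)) :
    deriv f (mobius a b c d z) * deriv f (mobius a b c d w) /
          (f (mobius a b c d z) - f (mobius a b c d w)) ^ 2 * (1 / (c * z + d) ^ 2) *
        (1 / (c * w + d) ^ 2) =
      deriv f z * deriv f w / (f z - f w) ^ 2 := by
  rw [hconj_z, hconj_w]
  set D := mobius a' b' c' d' (f z) - mobius a' b' c' d' (f w)
  linear_combination (deriv f (mobius a b c d w) * (1 / (c * w + d) ^ 2) / D ^ 2) * hderiv_z +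
    (deriv f z * (1 / (c' * f z + d') ^ 2) / D ^ 2) * hderiv_w +
    deriv f z * deriv f w * one_div_mobius_sub_sq_mul hdet' hfz hfw

end Conjugacy

theorem stmt9_general (f : ℂ → ℂ)
    (hf : DifferentiableOn ℂ f (Metric.ball (0 : ℂ) 1))
    (a b c d at' bt ct dt : ℂ)
    (hdet : a * d - b * c = 1) (hdet' : at' * dt - bt * ct = 1)
    (hden : ∀ z ∈ Metric.ball (0 : ℂ) 1, c * z + d ≠ 0)
    (hpres : ∀ z ∈ Metric.ball (0 : ℂ) 1,
      (a * z + b) / (c * z + d) ∈ Metric.ball (0 : ℂ) 1)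
    (hdent : ∀ z ∈ Metric.ball (0 : ℂ) 1, ct * f z + dt ≠ 0)
    (hconj : ∀ z ∈ Metric.ball (0 : ℂ) 1,
      f ((a * z + b) / (c * z + d)) = (at' * f z + bt) / (ct * f z + dt)) :
    ∀ z ∈ Metric.ball (0 : ℂ) 1, ∀ w ∈ Metric.ball (0 : ℂ) 1,
      (a * z + b) / (c * z + d) ≠ (a * w + b) / (c * w + d) →
      ((1 / (Real.pi : ℂ)) *
          (1 / ((a * z + b) / (c * z + d) - (a * w + b) / (c * w + d)) ^ 2 -
            deriv f ((a * z + b) / (c * z + d)) * deriv f ((a * w + b) / (c * w + d)) /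
              (f ((a * z + b) / (c * z + d)) - f ((a * w + b) / (c * w + d))) ^ 2)) *
          (1 / (c * z + d) ^ 2) * (1 / (c * w + d) ^ 2) =
        (1 / (Real.pi : ℂ)) *
          (1 / (z - w) ^ 2 - deriv f z * deriv f w / (f z - f w) ^ 2) := by
  intro z hz w hw _
  have hderiv : ∀ x ∈ Metric.ball (0 : ℂ) 1,
      deriv f (mobius a b c d x) * (1 / (c * x + d) ^ 2) =
        deriv f x * (1 / (ct * f x + dt) ^ 2) := fun x hx =>
    deriv_mobius_mul_of_conj hdet hdet'
      (hf.differentiableAt (Metric.isOpen_ball.mem_nhds (hpres x hx)))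
      (hf.differentiableAt (Metric.isOpen_ball.mem_nhds hx)) (hden x hx) (hdent x hx)
      (eventually_of_mem (Metric.isOpen_ball.mem_nhds hx) hconj)
  have hfirst := one_div_mobius_sub_sq_mul hdet (hden z hz) (hden w hw)
  have hsecond := deriv_mul_deriv_div_mobius_sub_sq_of_conj hdet' (hdent z hz) (hdent w hw)
    (hconj z hz) (hconj w hw) (hderiv z hz) (hderiv w hw)
  simp only [mobius] at hfirst hsecond
  linear_combination (1 / (Real.pi : ℂ)) * (hfirst - hsecond)

theorem stmt9 (f : ℂ → ℂ)
    (hf : DifferentiableOn ℂ f (Metric.ball (0 : ℂ) 1))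
    (hinj : Set.InjOn f (Metric.ball (0 : ℂ) 1))
    (a b c d at' bt ct dt : ℂ)
    (hdet : a * d - b * c = 1) (hdet' : at' * dt - bt * ct = 1)
    (hden : ∀ z ∈ Metric.ball (0 : ℂ) 1, c * z + d ≠ 0)
    (hpres : ∀ z ∈ Metric.ball (0 : ℂ) 1,
      (a * z + b) / (c * z + d) ∈ Metric.ball (0 : ℂ) 1)
    (hdent : ∀ z ∈ Metric.ball (0 : ℂ) 1, ct * f z + dt ≠ 0)
    (hconj : ∀ z ∈ Metric.ball (0 : ℂ) 1,
      f ((a * z + b) / (c * z + d)) = (at' * f z + bt) / (ct * f z + dt)) :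
    ∀ z ∈ Metric.ball (0 : ℂ) 1, ∀ w ∈ Metric.ball (0 : ℂ) 1,
      (a * z + b) / (c * z + d) ≠ (a * w + b) / (c * w + d) →
      ((1 / (Real.pi : ℂ)) *
          (1 / ((a * z + b) / (c * z + d) - (a * w + b) / (c * w + d)) ^ 2 -
            deriv f ((a * z + b) / (c * z + d)) * deriv f ((a * w + b) / (c * w + d)) /
              (f ((a * z + b) / (c * z + d)) - f ((a * w + b) / (c * w + d))) ^ 2)) *
          (1 / (c * z + d) ^ 2) * (1 / (c * w + d) ^ 2) =
        (1 / (Real.pi : ℂ)) *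
          (1 / (z - w) ^ 2 - deriv f z * deriv f w / (f z - f w) ^ 2) :=
  stmt9_general f hf a b c d at' bt ct dt hdet hdet' hden hpres hdent hconj
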